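/- For a matching problem where all free variables occur on one side and every free variable has at least one strict occurrence in the terms, matchability is decidable and, when a match exists, there is a most general matching substitution. -/

import Mathlib

/-- First-order terms. -/
inductive Tm : Type where
  | var : Nat → Tm
  | const : Nat → Tm
  | app : Tm → Tm → Tm
deriving DecidableEq

/-- Substitutions as (total) maps from variables to terms. -/
abbrev FSubst := Nat → Tm

def applyF (σ : FSubst) : Tm → Tm
  | Tm.var x => σ x
  | Tm.const c => Tm.const c
  | Tm.app t u => Tm.app (applyF σ t) (applyF σ u)

/-- Composition of substitutions: `t[σ ∘ θ] = t[σ][θ]`. -/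
def compF (σ θ : FSubst) : FSubst := fun x => applyF θ (σ x)

/-- `σ` unifies the problem `S`. -/
def UnifiesF (σ : FSubst) (S : List (Tm × Tm)) : Prop :=
  ∀ p ∈ S, applyF σ p.1 = applyF σ p.2

/-- `σ` is a most general unifier of `S`: it unifies `S` and every unifier
factors through it. -/
def IsMGUF (σ : FSubst) (S : List (Tm × Tm)) : Prop :=
  UnifiesF σ S ∧ ∀ θ, UnifiesF θ S → ∃ γ, ∀ t, applyF θ t = applyF γ (applyF σ t)

/-- The free variables of a term. -/
def FV : Tm → List Nat
  | Tm.var x => [x]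
  | Tm.const _ => []
  | Tm.app t u => FV t ++ FV u

/-- A term is ground if it has no free variables. -/
def Ground (t : Tm) : Prop := FV t = []

/-- `σ` solves the matching problem `S`: each left-hand side instantiates to
the corresponding (ground) right-hand side. -/
def Matches (σ : FSubst) (S : List (Tm × Tm)) : Prop :=
  ∀ p ∈ S, applyF σ p.1 = p.2

/-!
A match `θ` of `S` is forced on every variable `x` of a left-hand side `t`: `θ x` is the
subterm of the right-hand side sitting where `x` occurs in `t`. Reading these subterms off
gives one candidate substitution (the identity elsewhere), so a match exists iff the candidate
is one, which is decidable. Every match `θ` then agrees with the candidate on the left-hand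
variables, whose values are ground, hence `θ = θ ∘ candidate`.
-/

theorem applyF_congr {σ θ : FSubst} {t : Tm} (h : ∀ x ∈ FV t, σ x = θ x) :
    applyF σ t = applyF θ t := by
  induction t with
  | var x => exact h x (by simp [FV])
  | const c => rfl
  | app a b iha ihb =>
      simp only [FV, List.mem_append] at h
      simp only [applyF, iha fun x hx => h x (.inl hx), ihb fun x hx => h x (.inr hx)]

theorem applyF_applyF (σ θ : FSubst) (t : Tm) :
    applyF θ (applyF σ t) = applyF (compF σ θ) t := by
  induction t with
  | var x => rfl
  | const c => rfl
  | app a b iha ihb => simp only [applyF, iha, ihb]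

theorem applyF_of_ground {u : Tm} (h : Ground u) (θ : FSubst) : applyF θ u = u := by
  induction u with
  | var x => simp [Ground, FV] at h
  | const c => rfl
  | app a b iha ihb =>
      simp only [Ground, FV, List.append_eq_nil_iff] at h
      simp only [applyF, iha h.1, ihb h.2]

theorem FV_subset_FV_applyF {θ : FSubst} {t : Tm} {x : Nat} (hx : x ∈ FV t) :
    FV (θ x) ⊆ FV (applyF θ t) := by
  induction t with
  | var y =>
      simp only [FV, List.mem_singleton] at hx
      subst hx
      exact List.Subset.refl _
  | const c => simp [FV] at hx
  | app a b iha ihb =>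
      simp only [FV, List.mem_append] at hx
      rcases hx with hx | hx
      · exact List.Subset.trans (iha hx) (List.subset_append_left _ _)
      · exact List.Subset.trans (ihb hx) (List.subset_append_right _ _)

theorem ground_of_ground_applyF {θ : FSubst} {t : Tm} {x : Nat} (hx : x ∈ FV t)
    (h : Ground (applyF θ t)) : Ground (θ x) :=
  List.eq_nil_of_subset_nil (h ▸ FV_subset_FV_applyF hx)

/-- The subterm of `u` at the first occurrence of `x` in `t`, provided `t` and `u` have the
same shape down to that occurrence. -/
def Tm.subtermAt? : Tm → Tm → Nat → Option Tm
  | Tm.var y, u, x => if y = x then some u else none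
  | Tm.app t₁ t₂, Tm.app u₁ u₂, x => t₁.subtermAt? u₁ x <|> t₂.subtermAt? u₂ x
  | _, _, _ => none

theorem Tm.subtermAt?_applyF (θ : FSubst) (t : Tm) (x : Nat) :
    t.subtermAt? (applyF θ t) x = if x ∈ FV t then some (θ x) else none := by
  induction t with
  | var y => by_cases h : y = x <;> simp [subtermAt?, applyF, FV, h, Ne.symm]
  | const c => simp [subtermAt?, FV]
  | app a b iha ihb =>
      simp only [subtermAt?, applyF, iha, ihb, FV, List.mem_append]
      by_cases ha : x ∈ FV a <;> by_cases hb : x ∈ FV b <;> simp [ha, hb]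

def lhsVars (S : List (Tm × Tm)) : List Nat := S.flatMap fun p => FV p.1

def matchCandidate : List (Tm × Tm) → Nat → Option Tm
  | [], _ => none
  | p :: S, x => p.1.subtermAt? p.2 x <|> matchCandidate S x

def matcher (S : List (Tm × Tm)) : FSubst := fun x => (matchCandidate S x).getD (Tm.var x)

theorem matchCandidate_of_matches {θ : FSubst} {S : List (Tm × Tm)} (h : Matches θ S)
    (x : Nat) : matchCandidate S x = if x ∈ lhsVars S then some (θ x) else none := by
  induction S with
  | nil => simp [matchCandidate, lhsVars]
  | cons p S ih =>
      have hp : applyF θ p.1 = p.2 := h p List.mem_cons_self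
      have ih := ih fun q hq => h q (List.mem_cons_of_mem p hq)
      have hvars : lhsVars (p :: S) = FV p.1 ++ lhsVars S := List.flatMap_cons
      simp only [matchCandidate, ← hp, Tm.subtermAt?_applyF, ih, hvars, List.mem_append]
      by_cases ha : x ∈ FV p.1 <;> by_cases hb : x ∈ lhsVars S <;> simp [ha, hb]

theorem matcher_of_matches {θ : FSubst} {S : List (Tm × Tm)} (h : Matches θ S) (x : Nat) :
    matcher S x = if x ∈ lhsVars S then θ x else Tm.var x := by
  by_cases hx : x ∈ lhsVars S <;> simp [matcher, matchCandidate_of_matches h, hx]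

theorem matches_matcher {θ : FSubst} {S : List (Tm × Tm)} (h : Matches θ S) :
    Matches (matcher S) S := by
  intro p hp
  rw [← h p hp]
  refine applyF_congr fun x hx => ?_
  rw [matcher_of_matches h]
  exact if_pos (List.mem_flatMap.2 ⟨p, hp, hx⟩)

theorem exists_matches_iff (S : List (Tm × Tm)) :
    (∃ σ, Matches σ S) ↔ Matches (matcher S) S :=
  ⟨fun ⟨_, h⟩ => matches_matcher h, fun h => ⟨_, h⟩⟩

instance (σ : FSubst) (S : List (Tm × Tm)) : Decidable (Matches σ S) := by
  unfold Matches; infer_instance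

instance (S : List (Tm × Tm)) : Decidable (∃ σ, Matches σ S) :=
  decidable_of_iff' _ (exists_matches_iff S)

theorem applyF_matcher {θ : FSubst} {S : List (Tm × Tm)} (hground : ∀ p ∈ S, Ground p.2)
    (h : Matches θ S) (t : Tm) : applyF θ (applyF (matcher S) t) = applyF θ t := by
  rw [applyF_applyF]
  refine applyF_congr fun x _ => ?_
  simp only [compF, matcher_of_matches h]
  split_ifs with hx
  · obtain ⟨p, hp, hxp⟩ := List.mem_flatMap.1 hx
    exact applyF_of_ground (ground_of_ground_applyF hxp ((h p hp).symm ▸ hground p hp)) θ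
  · rfl

/-- for a matching problem with all free variables on one side
(the right-hand sides are ground; in this first-order setting every variable
occurrence is strict), matchability is decidable, and when a match exists
there is a most general matching substitution. -/
theorem matching_decidable_and_most_general
    (S : List (Tm × Tm)) (hground : ∀ p ∈ S, Ground p.2) :
    Nonempty (Decidable (∃ σ, Matches σ S)) ∧
    ((∃ σ, Matches σ S) →
      ∃ σ, Matches σ S ∧
        ∀ θ, Matches θ S → ∃ γ, ∀ t, applyF θ t = applyF γ (applyF σ t)) :=
  ⟨⟨inferInstance⟩, fun ⟨_, h⟩ =>
    ⟨matcher S, matches_matcher h, fun θ hθ => ⟨θ, fun t => (applyF_matcher hground hθ t).symm⟩⟩⟩
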